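/- Let α1 ≥ α2 > 0 and let η satisfy 0 < η ≤ min{(α1/100)^{64}, (α2/100)^{64}}. There exists n0 = n0(α1, α2, η) such that for every integer n > n0 the following holds: let G be a complete graph whose edges are coloured with three colours (red, blue, green), containing pairwise disjoint vertex sets X1, X2, Y1, Y2 with |X1|, |Y1| ≥ (α1 − 11η^{1/64})n and |X2|, |Y2| ≥ ((1/2)α2 − 6η^{1/64})n, such that the blue bipartite graphs G2[X1, X2] and G2[Y1, Y2] are each 4η^{1/64}n-almost-complete. If there exist distinct vertices x1, x2 ∈ X1 and distinct vertices y1, y2 ∈ Y1 such that the edges x1y1 and x2y2 are both coloured blue, then G contains a blue cycle on exactly ⟨⟨α2 n⟩⟩ vertices. -/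

import Mathlib

open SimpleGraph

/-- The largest even integer not greater than `x`. -/
noncomputable def evenFloor (x : ℝ) : ℤ := 2 * ⌊x / 2⌋

/-- The largest odd integer not greater than `x`. -/
noncomputable def oddFloor (x : ℝ) : ℤ := 2 * ⌊(x - 1) / 2⌋ + 1

/-- `G` contains a cycle on exactly `m` vertices. -/
def HasCycleLen {V : Type*} (G : SimpleGraph V) (m : ℕ) : Prop :=
  ∃ (v : V) (w : G.Walk v v), w.IsCycle ∧ w.length = m

/-- The colour-`i` subgraph of the complete graph on `V` whose edges are coloured by `χ`. -/
def colourGraph {V : Type*} (χ : Sym2 V → Fin 3) (i : Fin 3) : SimpleGraph V where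
  Adj u v := u ≠ v ∧ χ s(u, v) = i
  symm := ⟨by
    intro u v h
    refine ⟨h.1.symm, ?_⟩
    rw [Sym2.eq_swap]
    exact h.2⟩
  loopless := ⟨fun u h => h.1 rfl⟩

/-- Every 3-colouring of the edges of the complete graph on `N` vertices yields, for some
`i ∈ {1,2,3}`, a cycle on `mᵢ` vertices all of whose edges have colour `i`. -/
def CycleRamseyProp (m₁ m₂ m₃ N : ℕ) : Prop :=
  ∀ χ : Sym2 (Fin N) → Fin 3,
    HasCycleLen (colourGraph χ 0) m₁ ∨ HasCycleLen (colourGraph χ 1) m₂ ∨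
      HasCycleLen (colourGraph χ 2) m₃

/-- The degree of `v` in `G`. -/
noncomputable def ndeg {V : Type*} (G : SimpleGraph V) (v : V) : ℕ :=
  {u : V | G.Adj v u}.ncard

/-- The number of neighbours of `v` inside the set `S`. -/
noncomputable def degIn {V : Type*} (G : SimpleGraph V) (S : Finset V) (v : V) : ℕ :=
  {u : V | u ∈ S ∧ G.Adj v u}.ncard

/-- The number of ordered pairs `(a, b) ∈ A × B` with `a` adjacent to `b` in `G`. -/
noncomputable def pairCount {V : Type*} (G : SimpleGraph V) (A B : Finset V) : ℕ :=
  {p : V × V | p.1 ∈ A ∧ p.2 ∈ B ∧ G.Adj p.1 p.2}.ncard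

/-- The density `d(A,B)` of the pair `(A, B)` in `G`. -/
noncomputable def density {V : Type*} (G : SimpleGraph V) (A B : Finset V) : ℝ :=
  (pairCount G A B : ℝ) / ((A.card : ℝ) * (B.card : ℝ))

/-- The pair `(A, B)` is `(ε, G)`-regular. -/
def IsRegularPair {V : Type*} (G : SimpleGraph V) (ε : ℝ) (A B : Finset V) : Prop :=
  ∀ A' ⊆ A, ∀ B' ⊆ B, ε * (A.card : ℝ) ≤ (A'.card : ℝ) →
    ε * (B.card : ℝ) ≤ (B'.card : ℝ) →
    |density G A' B' - density G A B| < ε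

/-- The pair `(A, B)` is simultaneously `(ε, Gᵣ)`-regular for `r = 1, 2, 3`. -/
def SimRegular {V : Type*} (ε : ℝ) (G₁ G₂ G₃ : SimpleGraph V) (A B : Finset V) : Prop :=
  IsRegularPair G₁ ε A B ∧ IsRegularPair G₂ ε A B ∧ IsRegularPair G₃ ε A B

/-- `M` is a connected-matching in `G`: a collection of edges, pairwise vertex-disjoint,
all lying in the same connected component of `G`. -/
def IsConnMatching {V : Type*} (G : SimpleGraph V) (M : Finset (V × V)) : Prop :=
  (∀ e ∈ M, G.Adj e.1 e.2) ∧
  (∀ e ∈ M, ∀ f ∈ M, e ≠ f → e.1 ≠ f.1 ∧ e.1 ≠ f.2 ∧ e.2 ≠ f.1 ∧ e.2 ≠ f.2) ∧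
  (∀ e ∈ M, ∀ f ∈ M, G.Reachable e.1 f.1)

/-- `G` contains a connected-matching on at least `m` vertices. -/
def HasConnMatching {V : Type*} (G : SimpleGraph V) (m : ℝ) : Prop :=
  ∃ M : Finset (V × V), IsConnMatching G M ∧ m ≤ 2 * (M.card : ℝ)

/-- `G` contains an odd connected-matching on at least `m` vertices: a connected-matching
whose component also contains an odd cycle. -/
def HasOddConnMatching {V : Type*} (G : SimpleGraph V) (m : ℝ) : Prop :=
  ∃ M : Finset (V × V), IsConnMatching G M ∧ m ≤ 2 * (M.card : ℝ) ∧
    ∃ (v : V) (w : G.Walk v v), w.IsCycle ∧ Odd w.length ∧ ∀ e ∈ M, G.Reachable e.1 v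

/-- `(V₀, V₁, …, V_K)` (given as `P : Fin (K+1) → Finset V`, with `P 0` the exceptional class)
is an `(ε, G₁, G₂, G₃)`-regular partition. -/
def IsRegularPartition3 {V : Type*} [Fintype V] (ε : ℝ) (G₁ G₂ G₃ : SimpleGraph V)
    {K : ℕ} (P : Fin (K + 1) → Finset V) : Prop :=
  (∀ i j, i ≠ j → Disjoint (P i) (P j)) ∧
  (∀ v : V, ∃ i, v ∈ P i) ∧
  ((P 0).card : ℝ) ≤ ε * (Fintype.card V : ℝ) ∧
  (∀ i j : Fin (K + 1), i ≠ 0 → j ≠ 0 → (P i).card = (P j).card) ∧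
  (∀ i : Fin (K + 1), i ≠ 0 →
    (({j : Fin (K + 1) | j ≠ 0 ∧ j ≠ i ∧
        ¬ SimRegular ε G₁ G₂ G₃ (P i) (P j)}.ncard : ℝ) ≤ ε * K))

/-- The colour-`Gc` subgraph of the three-multicoloured `(ε, ξ, Π)`-reduced-graph of the
three-coloured graph with colour subgraphs `G₁, G₂, G₃` and regular partition `P`:
vertices are the non-exceptional classes `P 1, …, P K`; two of them are adjacent if the pair is
simultaneously `(ε, Gᵣ)`-regular for `r = 1,2,3` and receive colour `Gc` if moreover the
`Gc`-density of the pair is at least `ξ`. -/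
def reducedGraph {V : Type*} (ε ξ : ℝ) (G₁ G₂ G₃ : SimpleGraph V) {K : ℕ}
    (P : Fin (K + 1) → Finset V) (Gc : SimpleGraph V) : SimpleGraph (Fin K) where
  Adj a b := a ≠ b ∧
    (SimRegular ε G₁ G₂ G₃ (P a.succ) (P b.succ) ∧
      SimRegular ε G₁ G₂ G₃ (P b.succ) (P a.succ)) ∧
    (ξ ≤ density Gc (P a.succ) (P b.succ) ∧ ξ ≤ density Gc (P b.succ) (P a.succ))
  symm := ⟨by
    intro a b h
    exact ⟨h.1.symm, ⟨h.2.1.2, h.2.1.1⟩, ⟨h.2.2.2, h.2.2.1⟩⟩⟩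
  loopless := ⟨fun a h => h.1 rfl⟩

/-- The two-multicoloured graph induced on `X`, with colour subgraphs `Gγ₁` (colour `γ₁`)
and `Gγ₂` (colour `γ₂`), contains a two-multicoloured spanning subgraph belonging to the class
`H(x₁, x₂, c₁, c₂, γ₁, γ₂)`. -/
def ContainsClassH {V : Type*} [DecidableEq V] (Gγ₁ Gγ₂ : SimpleGraph V) (X : Finset V)
    (x₁ x₂ c₁ c₂ : ℝ) : Prop :=
  ∃ (H₁ H₂ : SimpleGraph V) (X₁ X₂ : Finset V),
    H₁ ≤ Gγ₁ ∧ H₂ ≤ Gγ₂ ∧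
    (∀ u v : V, (H₁ ⊔ H₂).Adj u v → u ∈ X ∧ v ∈ X) ∧
    Disjoint X₁ X₂ ∧ X₁ ∪ X₂ = X ∧
    x₁ ≤ (X₁.card : ℝ) ∧ x₂ ≤ (X₂.card : ℝ) ∧
    (∀ v ∈ X, ((X.card : ℝ) - 1) - c₁ ≤ (degIn (H₁ ⊔ H₂) X v : ℝ)) ∧
    (∀ v ∈ X₁, (1 - c₂) * ((X₁.card : ℝ) - 1) ≤ (degIn H₁ X₁ v : ℝ)) ∧
    (∀ v ∈ X₁, (degIn H₂ X₁ v : ℝ) ≤ c₂ * ((X₁.card : ℝ) - 1)) ∧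
    (∀ v ∈ X₁, (1 - c₂) * (X₂.card : ℝ) ≤ (degIn H₂ X₂ v : ℝ)) ∧
    (∀ v ∈ X₂, (1 - c₂) * (X₁.card : ℝ) ≤ (degIn H₂ X₁ v : ℝ)) ∧
    (∀ v ∈ X₁, (degIn H₁ X₂ v : ℝ) ≤ c₂ * (X₂.card : ℝ)) ∧
    (∀ v ∈ X₂, (degIn H₁ X₁ v : ℝ) ≤ c₂ * (X₁.card : ℝ))

/-- Membership of the structure `H((a − 2η^{1/32})k, (b/2 − 2η^{1/32})k, 3η⁴k, η^{1/32}, γ₁, γ₂)`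
on a vertex set `X`, where `Ga`, `Gb` are the colour-`γ₁` and colour-`γ₂` subgraphs. -/
def MemH1 {V : Type*} [DecidableEq V] (Ga Gb : SimpleGraph V) (a b η : ℝ) (k : ℕ)
    (X : Finset V) : Prop :=
  ContainsClassH Ga Gb X ((a - 2 * η ^ ((1 : ℝ) / 32)) * k)
    ((b / 2 - 2 * η ^ ((1 : ℝ) / 32)) * k) (3 * η ^ 4 * k) (η ^ ((1 : ℝ) / 32))

/-- The edge `uv` is coloured exclusively with the colour of `Ga` (and not the colours of
`Gb`, `Gc`). -/
def ExclColour {V : Type*} (Ga Gb Gc : SimpleGraph V) (u v : V) : Prop :=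
  Ga.Adj u v ∧ ¬ Gb.Adj u v ∧ ¬ Gc.Adj u v

/-- The three-multicoloured graph with colour subgraphs `G₁, G₂, G₃` (red, blue, green)
contains a subgraph from the class `K(x₁, x₂, x₃, c)`. -/
def ContainsClassK {V : Type*} [DecidableEq V] (G₁ G₂ G₃ : SimpleGraph V)
    (x₁ x₂ x₃ c : ℝ) : Prop :=
  ∃ (H : SimpleGraph V) (X₁ X₂ X₃ : Finset V),
    H ≤ G₁ ⊔ G₂ ⊔ G₃ ∧
    Disjoint X₁ X₂ ∧ Disjoint X₁ X₃ ∧ Disjoint X₂ X₃ ∧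
    x₁ ≤ (X₁.card : ℝ) ∧ x₂ ≤ (X₂.card : ℝ) ∧ x₃ ≤ (X₃.card : ℝ) ∧
    (∀ u v : V, H.Adj u v → u ∈ X₁ ∪ X₂ ∪ X₃ ∧ v ∈ X₁ ∪ X₂ ∪ X₃) ∧
    (∀ v ∈ X₁ ∪ X₂ ∪ X₃,
      (((X₁ ∪ X₂ ∪ X₃).card : ℝ) - 1) - c ≤ (degIn H (X₁ ∪ X₂ ∪ X₃) v : ℝ)) ∧
    (∀ u ∈ X₁, ∀ v ∈ X₃, H.Adj u v → ExclColour G₁ G₂ G₃ u v) ∧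
    (∀ u ∈ X₂, ∀ v ∈ X₃, H.Adj u v → ExclColour G₂ G₁ G₃ u v) ∧
    (∀ u ∈ X₃, ∀ v ∈ X₃, H.Adj u v → ExclColour G₃ G₁ G₂ u v)

/-- The three-multicoloured graph with colour subgraphs `G₁, G₂, G₃` (red, blue, green)
contains a subgraph from the class `K*(x₁, x₂, y₁, y₂, z, c)`. -/
def ContainsClassKstar {V : Type*} [DecidableEq V] (G₁ G₂ G₃ : SimpleGraph V)
    (x₁ x₂ y₁ y₂ z c : ℝ) : Prop :=
  ∃ (H : SimpleGraph V) (X₁ X₂ Y₁ Y₂ : Finset V),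
    H ≤ G₁ ⊔ G₂ ⊔ G₃ ∧
    Disjoint X₁ X₂ ∧ Disjoint X₁ Y₁ ∧ Disjoint X₁ Y₂ ∧
    Disjoint X₂ Y₁ ∧ Disjoint X₂ Y₂ ∧ Disjoint Y₁ Y₂ ∧
    x₁ ≤ (X₁.card : ℝ) ∧ x₂ ≤ (X₂.card : ℝ) ∧ y₁ ≤ (Y₁.card : ℝ) ∧ y₂ ≤ (Y₂.card : ℝ) ∧
    z ≤ (Y₁.card : ℝ) + (Y₂.card : ℝ) ∧
    (∀ u v : V, H.Adj u v → u ∈ X₁ ∪ X₂ ∪ Y₁ ∪ Y₂ ∧ v ∈ X₁ ∪ X₂ ∪ Y₁ ∪ Y₂) ∧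
    (∀ v ∈ X₁ ∪ X₂ ∪ Y₁ ∪ Y₂,
      (((X₁ ∪ X₂ ∪ Y₁ ∪ Y₂).card : ℝ) - 1) - c ≤ (degIn H (X₁ ∪ X₂ ∪ Y₁ ∪ Y₂) v : ℝ)) ∧
    (∀ u ∈ X₁, ∀ v ∈ Y₁, H.Adj u v → ExclColour G₁ G₂ G₃ u v) ∧
    (∀ u ∈ X₂, ∀ v ∈ Y₂, H.Adj u v → ExclColour G₁ G₂ G₃ u v) ∧
    (∀ u ∈ X₁, ∀ v ∈ Y₂, H.Adj u v → ExclColour G₂ G₁ G₃ u v) ∧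
    (∀ u ∈ X₂, ∀ v ∈ Y₁, H.Adj u v → ExclColour G₂ G₁ G₃ u v) ∧
    (∀ u ∈ X₁, ∀ v ∈ X₂, H.Adj u v → ExclColour G₃ G₁ G₂ u v) ∧
    (∀ u ∈ Y₁, ∀ v ∈ Y₂, H.Adj u v → ExclColour G₃ G₁ G₂ u v)

/-!
Inside an almost-complete bipartite pair `G[A, B]` every vertex misses few vertices of the other
side, so two vertices of `A` can be joined greedily by alternating paths of every even length up
to roughly `|B|`. An alternating `x₂ ⇝ x₁` path in `G₂[X₁, X₂]` and a `y₁ ⇝ y₂` path in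
`G₂[Y₁, Y₂]`, closed by the blue edges `x₁y₁` and `x₂y₂`, form a blue cycle; its length is
adjusted to `⟪α₂ n⟫` by splitting `⟪α₂ n⟫ / 2 - 1` between the two paths, which have room since
`η^{1/64} ≤ α₂ / 100`.
-/

open Finset

/-- The paper's `a`-almost-complete bipartite graph `G[A, B]`. -/
def IsAlmostComplete {V : Type*} (G : SimpleGraph V) (A B : Finset V) (a : ℝ) : Prop :=
  (∀ v ∈ A, (#B : ℝ) - a ≤ degIn G B v) ∧ (∀ v ∈ B, (#A : ℝ) - a ≤ degIn G A v)

section AlmostComplete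

variable {V : Type*} {G : SimpleGraph V}

lemma degIn_eq_card_filter [DecidableRel G.Adj] (S : Finset V) (v : V) :
    degIn G S v = #{u ∈ S | G.Adj v u} := by
  rw [degIn, ← Set.ncard_coe_finset]
  congr 1
  ext u
  simp

lemma exists_adj_mem_sdiff {B F : Finset V} {D : ℝ} {v : V}
    (hv : (#B : ℝ) - D ≤ degIn G B v) (hF : (#F : ℝ) + D < #B) :
    ∃ u ∈ B, u ∉ F ∧ G.Adj v u := by
  classical
  rw [degIn_eq_card_filter] at hv
  have hcard : #{u ∈ B | G.Adj v u} ≤ #({u ∈ B | G.Adj v u} \ F) + #F :=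
    card_le_card_sdiff_add_card
  obtain ⟨u, hu⟩ : ({u ∈ B | G.Adj v u} \ F).Nonempty := by
    rw [← card_pos]
    exact_mod_cast (show (0 : ℝ) < #({u ∈ B | G.Adj v u} \ F) by
      have := (Nat.cast_le (α := ℝ)).2 hcard; push_cast at this; linarith)
  simp only [mem_sdiff, mem_filter] at hu
  exact ⟨u, hu.1.1, hu.2, hu.1.2⟩

/-- Two vertices missing at most `D` vertices of `B` each still share `#B - 2D` neighbours
there. -/
lemma exists_common_adj_mem_sdiff {B F : Finset V} {D : ℝ} {a b : V}
    (ha : (#B : ℝ) - D ≤ degIn G B a) (hb : (#B : ℝ) - D ≤ degIn G B b)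
    (hF : (#F : ℝ) + 2 * D < #B) :
    ∃ u ∈ B, u ∉ F ∧ G.Adj a u ∧ G.Adj b u := by
  classical
  rw [degIn_eq_card_filter] at ha hb
  set Na := {u ∈ B | G.Adj a u}
  set Nb := {u ∈ B | G.Adj b u}
  have hunion : #(Na ∪ Nb) ≤ #B :=
    card_le_card (union_subset (filter_subset _ _) (filter_subset _ _))
  have hinter := card_inter_add_card_union Na Nb
  have hcard : #(Na ∩ Nb) ≤ #((Na ∩ Nb) \ F) + #F := card_le_card_sdiff_add_card
  obtain ⟨u, hu⟩ : ((Na ∩ Nb) \ F).Nonempty := by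
    rw [← card_pos]
    exact_mod_cast (show (0 : ℝ) < #((Na ∩ Nb) \ F) by
      have := (Nat.cast_le (α := ℝ)).2 hunion
      have := (Nat.cast_le (α := ℝ)).2 hcard
      have := congrArg (Nat.cast (R := ℝ)) hinter
      push_cast at *
      linarith)
  simp only [Na, Nb, mem_sdiff, mem_inter, mem_filter] at hu
  exact ⟨u, hu.1.1.1, hu.2, hu.1.1.2, hu.1.2.2⟩

end AlmostComplete

section AlternatingPath

variable {V : Type*} [DecidableEq V] {G : SimpleGraph V} {A B : Finset V} {D : ℝ}

/-- Greedy construction: step from `a` to a fresh neighbour in `B`, back to a fresh vertex of `A`,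
and recurse; the last step uses a common neighbour of the two current endpoints. -/
theorem exists_path_avoiding_of_isAlmostComplete (hAB : Disjoint A B)
    (hG : IsAlmostComplete G A B D) (hD : 0 ≤ D) {k : ℕ} (hk : 1 ≤ k) :
    ∀ {FA FB : Finset V} {a b : V}, a ∈ A → b ∈ A → a ≠ b → a ∉ FA → b ∉ FA →
      (#FB : ℝ) + k + 2 * D ≤ #B → (#FA : ℝ) + k + D + 2 ≤ #A →
      ∃ p : G.Walk a b, p.IsPath ∧ p.length = 2 * k ∧
        ∀ x ∈ p.support, x ∈ A \ FA ∨ x ∈ B \ FB := by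
  induction k, hk using Nat.le_induction with
  | base =>
    intro FA FB a b ha hb hab haFA hbFA hFB _
    obtain ⟨v, hvB, hvFB, hav, hbv⟩ :=
      exists_common_adj_mem_sdiff (F := FB) (hG.1 a ha) (hG.1 b hb) (by push_cast at hFB; linarith)
    refine ⟨.cons hav (.cons hbv.symm .nil), ?_, rfl, ?_⟩
    · simp [Walk.cons_isPath_iff, hav.ne, hbv.ne.symm, hab]
    · simp only [Walk.support_cons, Walk.support_nil, List.mem_cons, List.not_mem_nil,
        or_false]
      rintro x (rfl | rfl | rfl)
      · exact .inl (mem_sdiff.2 ⟨ha, haFA⟩)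
      · exact .inr (mem_sdiff.2 ⟨hvB, hvFB⟩)
      · exact .inl (mem_sdiff.2 ⟨hb, hbFA⟩)
  | succ k hk ih =>
    intro FA FB a b ha hb hab haFA hbFA hFB hFA
    obtain ⟨v, hvB, hvFB, hav⟩ :=
      exists_adj_mem_sdiff (F := FB) (hG.1 a ha) (by push_cast at hFB; linarith)
    have hcardF : #(insert a (insert b FA)) ≤ #FA + 2 :=
      (card_insert_le _ _).trans (Nat.add_le_add_right (card_insert_le _ _) 1)
    obtain ⟨a', ha'A, ha'F, hva'⟩ := exists_adj_mem_sdiff (F := insert a (insert b FA))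
      (hG.2 v hvB) (by
        have := (Nat.cast_le (α := ℝ)).2 hcardF
        push_cast at this hFA
        have : (1 : ℝ) ≤ k := by exact_mod_cast hk
        linarith)
    simp only [mem_insert, not_or] at ha'F
    obtain ⟨ha'a, ha'b, ha'FA⟩ := ha'F
    obtain ⟨p, hp, hlen, hsupp⟩ := ih (FA := insert a FA) (FB := insert v FB) ha'A hb ha'b
      (by simp [ha'a, ha'FA]) (by simp [Ne.symm hab, hbFA])
      (by have := (Nat.cast_le (α := ℝ)).2 (card_insert_le v FB); push_cast at *; linarith)
      (by have := (Nat.cast_le (α := ℝ)).2 (card_insert_le a FA); push_cast at *; linarith)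
    have hvp : v ∉ p.support := fun h => by
      rcases hsupp v h with h | h
      · exact disjoint_left.1 hAB (mem_sdiff.1 h).1 hvB
      · exact (mem_sdiff.1 h).2 (mem_insert_self v FB)
    have hap : a ∉ p.support := fun h => by
      rcases hsupp a h with h | h
      · exact (mem_sdiff.1 h).2 (mem_insert_self a FA)
      · exact disjoint_left.1 hAB ha (mem_sdiff.1 h).1
    refine ⟨.cons hav (.cons hva' p), ?_, by simp [hlen]; ring, ?_⟩
    · simp only [Walk.cons_isPath_iff, Walk.support_cons, List.mem_cons, not_or]
      exact ⟨⟨hp, hvp⟩, hav.ne, hap⟩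
    · simp only [Walk.support_cons, List.mem_cons]
      rintro x (rfl | rfl | hx)
      · exact .inl (mem_sdiff.2 ⟨ha, haFA⟩)
      · exact .inr (mem_sdiff.2 ⟨hvB, hvFB⟩)
      · refine (hsupp x hx).imp (fun h => ?_) (fun h => ?_) <;>
          exact sdiff_subset_sdiff subset_rfl (subset_insert _ _) h

theorem exists_path_of_isAlmostComplete (hAB : Disjoint A B) (hG : IsAlmostComplete G A B D)
    (hD : 0 ≤ D) {k : ℕ} (hk : 1 ≤ k) (hB : (k : ℝ) + 2 * D ≤ #B) (hA : (k : ℝ) + D + 2 ≤ #A)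
    {a b : V} (ha : a ∈ A) (hb : b ∈ A) (hab : a ≠ b) :
    ∃ p : G.Walk a b, p.IsPath ∧ p.length = 2 * k ∧ ∀ x ∈ p.support, x ∈ A ∪ B := by
  obtain ⟨p, hp, hlen, hsupp⟩ := exists_path_avoiding_of_isAlmostComplete hAB hG hD hk ha hb hab
    (notMem_empty a) (notMem_empty b) (FB := ∅) (by simpa using hB) (by simpa using hA)
  exact ⟨p, hp, hlen, fun x hx => by simpa using hsupp x hx⟩

end AlternatingPath

theorem hasCycleLen_of_isAlmostComplete {V : Type*} [DecidableEq V] {G : SimpleGraph V}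
    {X₁ X₂ Y₁ Y₂ : Finset V} {D : ℝ} (hX : Disjoint X₁ X₂) (hY : Disjoint Y₁ Y₂)
    (hXY : Disjoint (X₁ ∪ X₂) (Y₁ ∪ Y₂)) (hGX : IsAlmostComplete G X₁ X₂ D)
    (hGY : IsAlmostComplete G Y₁ Y₂ D) (hD : 0 ≤ D) {kX kY : ℕ} (hkX : 1 ≤ kX) (hkY : 1 ≤ kY)
    (hX₂ : (kX : ℝ) + 2 * D ≤ #X₂) (hX₁ : (kX : ℝ) + D + 2 ≤ #X₁)
    (hY₂ : (kY : ℝ) + 2 * D ≤ #Y₂) (hY₁ : (kY : ℝ) + D + 2 ≤ #Y₁)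
    {x₁ x₂ y₁ y₂ : V} (hx₁ : x₁ ∈ X₁) (hx₂ : x₂ ∈ X₁) (hx : x₁ ≠ x₂)
    (hy₁ : y₁ ∈ Y₁) (hy₂ : y₂ ∈ Y₁) (hy : y₁ ≠ y₂) (h₁ : G.Adj x₁ y₁) (h₂ : G.Adj x₂ y₂) :
    HasCycleLen G (2 * kX + 2 * kY + 2) := by
  obtain ⟨pX, hpX, hpX_len, hpX_supp⟩ :=
    exists_path_of_isAlmostComplete hX hGX hD hkX hX₂ hX₁ hx₂ hx₁ hx.symm
  obtain ⟨pY, hpY, hpY_len, hpY_supp⟩ :=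
    exists_path_of_isAlmostComplete hY hGY hD hkY hY₂ hY₁ hy₁ hy₂ hy
  have hsupp : pY.support.Disjoint pX.support := fun z hzY hzX =>
    disjoint_left.1 hXY (hpX_supp z hzX) (hpY_supp z hzY)
  have hx₁pY : x₁ ∉ pY.support := fun h => hsupp h pX.end_mem_support
  refine ⟨x₁, (Walk.cons h₁ pY).append (Walk.cons h₂.symm pX), ?_, ?_⟩
  · refine (hpY.cons hx₁pY).isCycle_append (hpX.cons fun h => hsupp pY.end_mem_support h) ?_
      (.inl (by simp [hpY_len]; omega))
    simpa using hsupp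
  · simp [hpX_len, hpY_len]
    ring

lemma exists_evenFloor_toNat_eq_two_mul {x : ℝ} (hx : 0 ≤ x) :
    ∃ l : ℕ, (evenFloor x).toNat = 2 * l ∧ x - 2 < 2 * l ∧ (2 * l : ℝ) ≤ x := by
  refine ⟨⌊x / 2⌋₊, ?_, ?_, ?_⟩
  · rw [evenFloor, ← Int.natCast_floor_eq_floor (by positivity)]
    omega
  · linarith [Nat.lt_floor_add_one (x / 2)]
  · linarith [Nat.floor_le (show 0 ≤ x / 2 by positivity)]

lemma rpow_one_div_le_of_le_pow {η c : ℝ} (hη : 0 ≤ η) (hc : 0 ≤ c) {k : ℕ} (hk : k ≠ 0)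
    (h : η ≤ c ^ k) : η ^ ((1 : ℝ) / k) ≤ c := by
  calc η ^ ((1 : ℝ) / k) ≤ (c ^ k) ^ ((1 : ℝ) / k) := Real.rpow_le_rpow hη h (by positivity)
    _ = c := by rw [one_div, Real.pow_rpow_inv_natCast hc hk]

/-- Two vertex-disjoint blue edges between `X₁` and `Y₁`, together with blue almost-complete
bipartite graphs `G₂[X₁,X₂]` and `G₂[Y₁,Y₂]`, yield a blue cycle on exactly `⟪α₂ n⟫`
vertices. -/
theorem blue_cycle_from_two_edges (α₁ α₂ η : ℝ) (hα₂ : 0 < α₂) (h₂₁ : α₂ ≤ α₁) (hη0 : 0 < η)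
    (hη : η ≤ min ((α₁ / 100) ^ (64 : ℕ)) ((α₂ / 100) ^ (64 : ℕ))) :
    ∃ n₀ : ℕ, ∀ n : ℕ, n₀ < n →
      ∀ (V : Type) [Fintype V], ∀ (χ : Sym2 V → Fin 3) (X₁ X₂ Y₁ Y₂ : Finset V),
        Disjoint X₁ X₂ → Disjoint X₁ Y₁ → Disjoint X₁ Y₂ →
        Disjoint X₂ Y₁ → Disjoint X₂ Y₂ → Disjoint Y₁ Y₂ →
        (α₁ - 11 * η ^ ((1 : ℝ) / 64)) * n ≤ (X₁.card : ℝ) →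
        (α₁ - 11 * η ^ ((1 : ℝ) / 64)) * n ≤ (Y₁.card : ℝ) →
        (α₂ / 2 - 6 * η ^ ((1 : ℝ) / 64)) * n ≤ (X₂.card : ℝ) →
        (α₂ / 2 - 6 * η ^ ((1 : ℝ) / 64)) * n ≤ (Y₂.card : ℝ) →
        (∀ v ∈ X₁, (X₂.card : ℝ) - 4 * η ^ ((1 : ℝ) / 64) * n ≤
          (degIn (colourGraph χ 1) X₂ v : ℝ)) →
        (∀ v ∈ X₂, (X₁.card : ℝ) - 4 * η ^ ((1 : ℝ) / 64) * n ≤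
          (degIn (colourGraph χ 1) X₁ v : ℝ)) →
        (∀ v ∈ Y₁, (Y₂.card : ℝ) - 4 * η ^ ((1 : ℝ) / 64) * n ≤
          (degIn (colourGraph χ 1) Y₂ v : ℝ)) →
        (∀ v ∈ Y₂, (Y₁.card : ℝ) - 4 * η ^ ((1 : ℝ) / 64) * n ≤
          (degIn (colourGraph χ 1) Y₁ v : ℝ)) →
        ∀ x₁ x₂ y₁ y₂ : V, x₁ ∈ X₁ → x₂ ∈ X₁ → x₁ ≠ x₂ → y₁ ∈ Y₁ → y₂ ∈ Y₁ → y₁ ≠ y₂ →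
          χ s(x₁, y₁) = 1 → χ s(x₂, y₂) = 1 →
          HasCycleLen (colourGraph χ 1) (evenFloor (α₂ * n)).toNat := by
  have hβ : η ^ ((1 : ℝ) / 64) ≤ α₂ / 100 := by
    exact_mod_cast rpow_one_div_le_of_le_pow hη0.le (by positivity) (k := 64) (by norm_num)
      (hη.trans (min_le_right _ _))
  refine ⟨⌈100 / α₂⌉₊, fun n hn V _ χ X₁ X₂ Y₁ Y₂ hX₁X₂ hX₁Y₁ hX₁Y₂ hX₂Y₁ hX₂Y₂ hY₁Y₂
    hX₁ hY₁ hX₂ hY₂ hdX₁ hdX₂ hdY₁ hdY₂ x₁ x₂ y₁ y₂ hx₁ hx₂ hx hy₁ hy₂ hy hc₁ hc₂ => ?_⟩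
  classical
  set β := η ^ ((1 : ℝ) / 64)
  have hαn100 : 100 ≤ α₂ * n := by
    have := (div_le_iff₀ hα₂).1 (Nat.ceil_le.1 hn.le)
    linarith
  have hβn : β * n ≤ α₂ / 100 * n := mul_le_mul_of_nonneg_right hβ n.cast_nonneg
  have hαn : α₂ * n ≤ α₁ * n := mul_le_mul_of_nonneg_right h₂₁ n.cast_nonneg
  obtain ⟨l, hm, hl_lo, hl_hi⟩ := exists_evenFloor_toNat_eq_two_mul (by positivity : 0 ≤ α₂ * n)
  have hl : 3 ≤ l := by exact_mod_cast (show (3 : ℝ) ≤ l by linarith)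
  have hquarter : ∀ j : ℕ, 2 * j ≤ l → (j : ℝ) ≤ α₂ * n / 4 := fun j hj => by
    have : (2 * j : ℝ) ≤ l := by exact_mod_cast hj
    linarith
  have hkX := hquarter (l / 2) (by omega)
  have hkY := hquarter ((l - 1) / 2) (by omega)
  rw [hm, show 2 * l = 2 * (l / 2) + 2 * ((l - 1) / 2) + 2 by omega]
  exact hasCycleLen_of_isAlmostComplete (D := 4 * β * n) hX₁X₂ hY₁Y₂
    (disjoint_union_left.2 ⟨disjoint_union_right.2 ⟨hX₁Y₁, hX₁Y₂⟩,
      disjoint_union_right.2 ⟨hX₂Y₁, hX₂Y₂⟩⟩)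
    ⟨hdX₁, hdX₂⟩ ⟨hdY₁, hdY₂⟩ (by positivity) (by omega) (by omega)
    (by linarith) (by linarith) (by linarith) (by linarith) hx₁ hx₂ hx hy₁ hy₂ hy
    ⟨disjoint_iff_ne.1 hX₁Y₁ x₁ hx₁ y₁ hy₁, hc₁⟩ ⟨disjoint_iff_ne.1 hX₁Y₁ x₂ hx₂ y₂ hy₂, hc₂⟩
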